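/- Let ℓ, n be integers with 1 ≤ n < ℓ, and let p = (p₁, …, p_ℓ) ∈ (ℝⁿ)^ℓ be such that p₁, …, p_{n+1} ∈ ℝⁿ are in general position. Then the distance-squared mapping D_p : ℝⁿ → ℝ^ℓ is 𝒜-equivalent to the inclusion (x₁, …, xₙ) ↦ (x₁, …, xₙ, 0, …, 0). -/

import Mathlib

noncomputable section

/-- The distance-squared mapping `D_p : ℝⁿ → ℝ^ℓ` associated to points `p 0, …, p (ℓ-1) ∈ ℝⁿ`. -/
def DpGen {ℓ n : ℕ} (p : Fin ℓ → EuclideanSpace ℝ (Fin n)) (x : EuclideanSpace ℝ (Fin n)) :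
    EuclideanSpace ℝ (Fin ℓ) :=
  (EuclideanSpace.equiv (Fin ℓ) ℝ).symm (fun i => ‖x - p i‖ ^ 2)

open scoped RealInnerProductSpace

namespace S3

variable {ℓ n : ℕ}

/-- index 0 in `Fin ℓ`. -/
def i0 (hnℓ : n < ℓ) : Fin ℓ := ⟨0, by omega⟩
/-- index n in `Fin ℓ`. -/
def iN (hnℓ : n < ℓ) : Fin ℓ := ⟨n, hnℓ⟩
/-- index k+1 in `Fin ℓ`, for `k : Fin n`. -/
def iS (hnℓ : n < ℓ) (k : Fin n) : Fin ℓ := ⟨(k : ℕ) + 1, by have := k.isLt; omega⟩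

def vvec (hnℓ : n < ℓ) (p : Fin ℓ → EuclideanSpace ℝ (Fin n)) (k : Fin n) :
    EuclideanSpace ℝ (Fin n) :=
  p (iS hnℓ k) - p (i0 hnℓ)

/-- the linear part of the affine change of coordinates. -/
def Lmap (v : Fin n → EuclideanSpace ℝ (Fin n)) :
    EuclideanSpace ℝ (Fin n) →ₗ[ℝ] EuclideanSpace ℝ (Fin n) :=
  (WithLp.linearEquiv 2 ℝ (∀ _ : Fin n, ℝ)).symm.toLinearMap ∘ₗ
    LinearMap.pi fun k =>
      (-2 : ℝ) • ((innerSL ℝ (v k)).toLinearMap)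

lemma Lmap_apply (v : Fin n → EuclideanSpace ℝ (Fin n)) (x : EuclideanSpace ℝ (Fin n))
    (k : Fin n) : Lmap v x k = -2 * ⟪v k, x⟫ := rfl

lemma Lmap_injective (hn : 1 ≤ n) (v : Fin n → EuclideanSpace ℝ (Fin n))
    (hv : LinearIndependent ℝ v) : Function.Injective (Lmap v) := by
  have : Nonempty (Fin n) := ⟨⟨0, hn⟩⟩
  rw [← LinearMap.ker_eq_bot, Submodule.eq_bot_iff]
  intro x hx
  rw [LinearMap.mem_ker] at hx
  have hxk : ∀ k, ⟪v k, x⟫ = 0 := by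
    intro k
    have h2 : Lmap v x k = 0 := by rw [hx]; rfl
    rw [Lmap_apply] at h2
    linarith
  set b := basisOfLinearIndependentOfCardEqFinrank hv (by simp) with hbdef
  have hb : ⇑b = v := coe_basisOfLinearIndependentOfCardEqFinrank hv _
  have hxx : ⟪x, x⟫ = 0 := by
    nth_rewrite 1 [← b.sum_repr x]
    rw [sum_inner]
    refine Finset.sum_eq_zero fun k _ => ?_
    rw [real_inner_smul_left, show b k = v k from congrFun hb k, hxk, mul_zero]
  exact inner_self_eq_zero.mp hxx

/-- the `w`-extraction: first `n` shifted differences of coordinates. -/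
def wmap (hnℓ : n < ℓ) (z : EuclideanSpace ℝ (Fin ℓ)) : EuclideanSpace ℝ (Fin n) :=
  (EuclideanSpace.equiv (Fin n) ℝ).symm fun k => z (iS hnℓ k) - z (i0 hnℓ)

lemma wmap_apply (hnℓ : n < ℓ) (z : EuclideanSpace ℝ (Fin ℓ)) (k : Fin n) :
    wmap hnℓ z k = z (iS hnℓ k) - z (i0 hnℓ) := rfl

/-- the `w`-extraction from the target side: the first `n` coordinates. -/
def wumap (hnℓ : n < ℓ) (u : EuclideanSpace ℝ (Fin ℓ)) : EuclideanSpace ℝ (Fin n) :=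
  (EuclideanSpace.equiv (Fin n) ℝ).symm fun k => u ⟨(k : ℕ), Nat.lt_trans k.isLt hnℓ⟩

lemma wumap_apply (hnℓ : n < ℓ) (u : EuclideanSpace ℝ (Fin ℓ)) (k : Fin n) :
    wumap hnℓ u k = u ⟨(k : ℕ), Nat.lt_trans k.isLt hnℓ⟩ := rfl

/-- the target-side shear `ψ`. -/
def psiFun (hnℓ : n < ℓ) (G : Fin ℓ → EuclideanSpace ℝ (Fin n) → ℝ)
    (z : EuclideanSpace ℝ (Fin ℓ)) : EuclideanSpace ℝ (Fin ℓ) :=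
  (EuclideanSpace.equiv (Fin ℓ) ℝ).symm fun j =>
    if h : (j : ℕ) < n then z (iS hnℓ ⟨(j : ℕ), h⟩) - z (i0 hnℓ)
    else if (j : ℕ) = n then z (i0 hnℓ) - G (i0 hnℓ) (wmap hnℓ z)
    else z j - G j (wmap hnℓ z)

lemma psiFun_apply (hnℓ : n < ℓ) (G : Fin ℓ → EuclideanSpace ℝ (Fin n) → ℝ)
    (z : EuclideanSpace ℝ (Fin ℓ)) (j : Fin ℓ) :
    psiFun hnℓ G z j =
      if h : (j : ℕ) < n then z (iS hnℓ ⟨(j : ℕ), h⟩) - z (i0 hnℓ)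
      else if (j : ℕ) = n then z (i0 hnℓ) - G (i0 hnℓ) (wmap hnℓ z)
      else z j - G j (wmap hnℓ z) := rfl

/-- the inverse shear. -/
def psiInv (hnℓ : n < ℓ) (G : Fin ℓ → EuclideanSpace ℝ (Fin n) → ℝ)
    (u : EuclideanSpace ℝ (Fin ℓ)) : EuclideanSpace ℝ (Fin ℓ) :=
  (EuclideanSpace.equiv (Fin ℓ) ℝ).symm fun i =>
    if (i : ℕ) = 0 then u (iN hnℓ) + G (i0 hnℓ) (wumap hnℓ u)
    else if h : (i : ℕ) ≤ n then
      u ⟨(i : ℕ) - 1, by omega⟩ + (u (iN hnℓ) + G (i0 hnℓ) (wumap hnℓ u))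
    else u i + G i (wumap hnℓ u)

lemma psiInv_apply (hnℓ : n < ℓ) (G : Fin ℓ → EuclideanSpace ℝ (Fin n) → ℝ)
    (u : EuclideanSpace ℝ (Fin ℓ)) (i : Fin ℓ) :
    psiInv hnℓ G u i =
      if (i : ℕ) = 0 then u (iN hnℓ) + G (i0 hnℓ) (wumap hnℓ u)
      else if h : (i : ℕ) ≤ n then
        u ⟨(i : ℕ) - 1, by omega⟩ + (u (iN hnℓ) + G (i0 hnℓ) (wumap hnℓ u))
      else u i + G i (wumap hnℓ u) := rfl

lemma wumap_psiFun (hnℓ : n < ℓ) (G : Fin ℓ → EuclideanSpace ℝ (Fin n) → ℝ)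
    (z : EuclideanSpace ℝ (Fin ℓ)) : wumap hnℓ (psiFun hnℓ G z) = wmap hnℓ z := by
  ext k
  rw [wumap_apply, psiFun_apply, wmap_apply]
  rw [dif_pos (show ((⟨(k : ℕ), Nat.lt_trans k.isLt hnℓ⟩ : Fin ℓ) : ℕ) < n from k.isLt)]

lemma wmap_psiInv (hnℓ : n < ℓ) (G : Fin ℓ → EuclideanSpace ℝ (Fin n) → ℝ)
    (u : EuclideanSpace ℝ (Fin ℓ)) : wmap hnℓ (psiInv hnℓ G u) = wumap hnℓ u := by
  ext k
  rw [wmap_apply, wumap_apply, psiInv_apply, psiInv_apply]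
  have hk1 : ((iS hnℓ k : Fin ℓ) : ℕ) = (k : ℕ) + 1 := rfl
  have hk0 : ((i0 hnℓ : Fin ℓ) : ℕ) = 0 := rfl
  rw [if_neg (show ¬((iS hnℓ k : Fin ℓ) : ℕ) = 0 from by omega),
    dif_pos (show ((iS hnℓ k : Fin ℓ) : ℕ) ≤ n from by have := k.isLt; omega),
    if_pos hk0]
  rw [show (⟨((iS hnℓ k : Fin ℓ) : ℕ) - 1, by have := k.isLt; omega⟩ : Fin ℓ) =
      ⟨(k : ℕ), Nat.lt_trans k.isLt hnℓ⟩ from Fin.ext (by simp [hk1])]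
  ring

lemma psi_left_inv (hnℓ : n < ℓ) (G : Fin ℓ → EuclideanSpace ℝ (Fin n) → ℝ) :
    Function.LeftInverse (psiInv hnℓ G) (psiFun hnℓ G) := by
  intro z
  ext i
  rw [psiInv_apply, wumap_psiFun]
  have hN : ((iN hnℓ : Fin ℓ) : ℕ) = n := rfl
  by_cases h0 : (i : ℕ) = 0
  · rw [if_pos h0, psiFun_apply]
    rw [dif_neg (show ¬((iN hnℓ : Fin ℓ) : ℕ) < n from by omega), if_pos hN]
    rw [show i = i0 hnℓ from Fin.ext (by simpa [i0] using h0)]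
    ring
  · rw [if_neg h0]
    by_cases h1 : (i : ℕ) ≤ n
    · rw [dif_pos h1]
      simp only [psiFun_apply]
      rw [dif_pos (show (i : ℕ) - 1 < n from by omega)]
      rw [dif_neg (show ¬((iN hnℓ : Fin ℓ) : ℕ) < n from by omega), if_pos hN]
      rw [show iS hnℓ ⟨(i : ℕ) - 1, by omega⟩ = i from
        Fin.ext (by simp [iS]; omega)]
      ring
    · rw [dif_neg h1, psiFun_apply]
      rw [dif_neg (show ¬(i : ℕ) < n from by omega),
        if_neg (show ¬(i : ℕ) = n from by omega)]
      ring

lemma psi_right_inv (hnℓ : n < ℓ) (G : Fin ℓ → EuclideanSpace ℝ (Fin n) → ℝ) :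
    Function.RightInverse (psiInv hnℓ G) (psiFun hnℓ G) := by
  intro u
  ext j
  rw [psiFun_apply, wmap_psiInv]
  have hk0 : ((i0 hnℓ : Fin ℓ) : ℕ) = 0 := rfl
  by_cases h : (j : ℕ) < n
  · rw [dif_pos h]
    simp only [psiInv_apply]
    have hk1 : ((iS hnℓ ⟨(j : ℕ), h⟩ : Fin ℓ) : ℕ) = (j : ℕ) + 1 := rfl
    rw [if_neg (show ¬((iS hnℓ ⟨(j : ℕ), h⟩ : Fin ℓ) : ℕ) = 0 from by omega),
      dif_pos (show ((iS hnℓ ⟨(j : ℕ), h⟩ : Fin ℓ) : ℕ) ≤ n from by omega),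
      if_pos hk0]
    rw [show (⟨((iS hnℓ ⟨(j : ℕ), h⟩ : Fin ℓ) : ℕ) - 1, by omega⟩ : Fin ℓ) = j from
      Fin.ext (by simp [hk1])]
    ring
  · by_cases h2 : (j : ℕ) = n
    · rw [dif_neg h, if_pos h2, psiInv_apply, if_pos hk0]
      rw [show iN hnℓ = j from Fin.ext (by simp [iN, h2])]
      ring
    · rw [dif_neg h, if_neg h2, psiInv_apply]
      rw [if_neg (show ¬(j : ℕ) = 0 from by omega),
        dif_neg (show ¬(j : ℕ) ≤ n from by omega)]
      ring

lemma contDiff_wmap (hnℓ : n < ℓ) : ContDiff ℝ (⊤ : ℕ∞) (wmap hnℓ) := by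
  rw [contDiff_euclidean]
  intro k
  have : (fun z : EuclideanSpace ℝ (Fin ℓ) => wmap hnℓ z k) =
      fun z => z (iS hnℓ k) - z (i0 hnℓ) := funext fun z => wmap_apply hnℓ z k
  rw [this]
  exact (ContinuousLinearMap.contDiff (EuclideanSpace.proj (𝕜 := ℝ) (iS hnℓ k))).sub (ContinuousLinearMap.contDiff (EuclideanSpace.proj (𝕜 := ℝ) (i0 hnℓ)))

lemma contDiff_wumap (hnℓ : n < ℓ) : ContDiff ℝ (⊤ : ℕ∞) (wumap hnℓ) := by
  rw [contDiff_euclidean]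
  intro k
  exact ContinuousLinearMap.contDiff (EuclideanSpace.proj (𝕜 := ℝ) (⟨(k : ℕ), Nat.lt_trans k.isLt hnℓ⟩ : Fin ℓ))

lemma contDiff_psiFun (hnℓ : n < ℓ) (G : Fin ℓ → EuclideanSpace ℝ (Fin n) → ℝ)
    (hG : ∀ i, ContDiff ℝ (⊤ : ℕ∞) (G i)) : ContDiff ℝ (⊤ : ℕ∞) (psiFun hnℓ G) := by
  rw [contDiff_euclidean]
  intro j
  have : (fun z : EuclideanSpace ℝ (Fin ℓ) => psiFun hnℓ G z j) =
      (fun z => if h : (j : ℕ) < n then z (iS hnℓ ⟨(j : ℕ), h⟩) - z (i0 hnℓ)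
        else if (j : ℕ) = n then z (i0 hnℓ) - G (i0 hnℓ) (wmap hnℓ z)
        else z j - G j (wmap hnℓ z)) := funext fun z => psiFun_apply hnℓ G z j
  rw [this]
  by_cases h : (j : ℕ) < n
  · simp only [dif_pos h]
    exact (ContinuousLinearMap.contDiff
        (EuclideanSpace.proj (𝕜 := ℝ) (iS hnℓ ⟨(j : ℕ), h⟩))).sub
      (ContinuousLinearMap.contDiff (EuclideanSpace.proj (𝕜 := ℝ) (i0 hnℓ)))
  · simp only [dif_neg h]
    by_cases h2 : (j : ℕ) = n
    · simp only [if_pos h2]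
      exact (ContinuousLinearMap.contDiff
          (EuclideanSpace.proj (𝕜 := ℝ) (i0 hnℓ))).sub ((hG _).comp (contDiff_wmap hnℓ))
    · simp only [if_neg h2]
      exact (ContinuousLinearMap.contDiff
          (EuclideanSpace.proj (𝕜 := ℝ) j)).sub ((hG _).comp (contDiff_wmap hnℓ))

lemma contDiff_psiInv (hnℓ : n < ℓ) (G : Fin ℓ → EuclideanSpace ℝ (Fin n) → ℝ)
    (hG : ∀ i, ContDiff ℝ (⊤ : ℕ∞) (G i)) : ContDiff ℝ (⊤ : ℕ∞) (psiInv hnℓ G) := by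
  rw [contDiff_euclidean]
  intro i
  have : (fun u : EuclideanSpace ℝ (Fin ℓ) => psiInv hnℓ G u i) =
      (fun u => if (i : ℕ) = 0 then u (iN hnℓ) + G (i0 hnℓ) (wumap hnℓ u)
        else if h : (i : ℕ) ≤ n then
          u ⟨(i : ℕ) - 1, by omega⟩ + (u (iN hnℓ) + G (i0 hnℓ) (wumap hnℓ u))
        else u i + G i (wumap hnℓ u)) := funext fun u => psiInv_apply hnℓ G u i
  rw [this]
  by_cases h0 : (i : ℕ) = 0
  · simp only [if_pos h0]
    exact (ContinuousLinearMap.contDiff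
        (EuclideanSpace.proj (𝕜 := ℝ) (iN hnℓ))).add ((hG _).comp (contDiff_wumap hnℓ))
  · simp only [if_neg h0]
    by_cases h1 : (i : ℕ) ≤ n
    · simp only [dif_pos h1]
      exact (ContinuousLinearMap.contDiff
          (EuclideanSpace.proj (𝕜 := ℝ) (⟨(i : ℕ) - 1, by omega⟩ : Fin ℓ))).add
        ((ContinuousLinearMap.contDiff
          (EuclideanSpace.proj (𝕜 := ℝ) (iN hnℓ))).add ((hG _).comp (contDiff_wumap hnℓ)))
    · simp only [dif_neg h1]
      exact (ContinuousLinearMap.contDiff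
          (EuclideanSpace.proj (𝕜 := ℝ) i)).add ((hG _).comp (contDiff_wumap hnℓ))

end S3

open S3 in
theorem stmt3 (ℓ n : ℕ) (hn : 1 ≤ n) (hnℓ : n < ℓ)
    (p : Fin ℓ → EuclideanSpace ℝ (Fin n))
    -- the first `n+1` points of `p` are in general position
    (hp : LinearIndependent ℝ
      (fun i : {i : Fin (n + 1) // i ≠ 0} =>
        p (Fin.castLE hnℓ i.1) - p (Fin.castLE hnℓ 0))) :
    ∃ (φ : EuclideanSpace ℝ (Fin n) ≃ EuclideanSpace ℝ (Fin n))
      (ψ : EuclideanSpace ℝ (Fin ℓ) ≃ EuclideanSpace ℝ (Fin ℓ)),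
      ContDiff ℝ (⊤ : ℕ∞) φ ∧ ContDiff ℝ (⊤ : ℕ∞) φ.symm ∧ ContDiff ℝ (⊤ : ℕ∞) ψ ∧ ContDiff ℝ (⊤ : ℕ∞) ψ.symm ∧
      ∀ x : EuclideanSpace ℝ (Fin n),
        ψ (DpGen p (φ.symm x)) =
          (EuclideanSpace.equiv (Fin ℓ) ℝ).symm
            (fun i : Fin ℓ =>
              if h : (i : ℕ) < n then x ⟨(i : ℕ), h⟩ else 0) := by
  classical
  -- linear independence of the difference vectors
  have hv : LinearIndependent ℝ (vvec hnℓ p) := by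
    have hinj : Function.Injective
        (fun k : Fin n => (⟨k.succ, Fin.succ_ne_zero k⟩ : {i : Fin (n + 1) // i ≠ 0})) := by
      intro a b hab
      simpa [Fin.succ_inj] using Subtype.ext_iff.mp hab
    have := hp.comp _ hinj
    have heq : vvec hnℓ p = ((fun i : {i : Fin (n + 1) // i ≠ 0} =>
        p (Fin.castLE hnℓ i.1) - p (Fin.castLE hnℓ 0)) ∘
        fun k : Fin n => (⟨k.succ, Fin.succ_ne_zero k⟩ : {i : Fin (n + 1) // i ≠ 0})) := by
      funext k
      show vvec hnℓ p k = p (Fin.castLE hnℓ (k.succ)) - p (Fin.castLE hnℓ 0)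
      unfold vvec iS i0
      congr 1 <;> congr 1 <;> apply Fin.ext <;> simp
    rw [heq]
    exact this
  set v := vvec hnℓ p with hvdef
  have hLinj : Function.Injective (Lmap v) := Lmap_injective hn v hv
  set T : EuclideanSpace ℝ (Fin n) ≃ₗ[ℝ] EuclideanSpace ℝ (Fin n) :=
    LinearEquiv.ofInjectiveEndo (Lmap v) hLinj with hTdef
  have hT : ∀ x, T x = Lmap v x := fun x => rfl
  -- the constant vector c
  set c : EuclideanSpace ℝ (Fin n) :=
    (EuclideanSpace.equiv (Fin n) ℝ).symm
      (fun k => ‖p (iS hnℓ k)‖ ^ 2 - ‖p (i0 hnℓ)‖ ^ 2) with hcdef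
  -- the diffeomorphism φ
  set φ : EuclideanSpace ℝ (Fin n) ≃ EuclideanSpace ℝ (Fin n) :=
    T.toEquiv.trans (Equiv.addRight c) with hφdef
  have hφapp : ∀ x, φ x = Lmap v x + c := fun x => rfl
  have hφsymm : ∀ x, φ.symm x = T.symm (x - c) := by
    intro x
    simp [hφdef, Equiv.symm_trans_apply, Equiv.addRight, ← sub_eq_add_neg]
  -- G
  set G : Fin ℓ → EuclideanSpace ℝ (Fin n) → ℝ :=
    fun i w => ‖(φ.symm w) - p i‖ ^ 2 with hGdef
  have hφsymmCD : ContDiff ℝ (⊤ : ℕ∞) (⇑φ.symm) := by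
    have h1 : ContDiff ℝ (⊤ : ℕ∞) (⇑T.symm) := by
      have := (LinearMap.toContinuousLinearMap (T.symm.toLinearMap)).contDiff (n := ((⊤ : ℕ∞) : WithTop ℕ∞))
      simpa using this
    have : (⇑φ.symm) = (⇑T.symm) ∘ (fun x => x - c) := funext fun x => hφsymm x
    rw [this]
    exact h1.comp (contDiff_id.sub contDiff_const)
  have hG : ∀ i, ContDiff ℝ (⊤ : ℕ∞) (G i) :=
    fun i => ContDiff.norm_sq ℝ (hφsymmCD.sub contDiff_const)
  have hφCD : ContDiff ℝ (⊤ : ℕ∞) (⇑φ) := by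
    have h1 : ContDiff ℝ (⊤ : ℕ∞) (⇑(Lmap v)) := by
      have := (LinearMap.toContinuousLinearMap (Lmap v)).contDiff (n := ((⊤ : ℕ∞) : WithTop ℕ∞))
      simpa using this
    have : (⇑φ) = fun x => Lmap v x + c := funext fun x => hφapp x
    rw [this]
    exact h1.add contDiff_const
  -- key computation : wmap (DpGen p y) = φ y
  have hkey : ∀ y : EuclideanSpace ℝ (Fin n), wmap hnℓ (DpGen p y) = φ y := by
    intro y
    ext k
    rw [wmap_apply]
    have hD : ∀ i, DpGen p y i = ‖y - p i‖ ^ 2 := fun i => rfl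
    rw [hD, hD, hφapp]
    have hadd : (Lmap v y + c) k = Lmap v y k + c k := rfl
    have hc : c k = ‖p (iS hnℓ k)‖ ^ 2 - ‖p (i0 hnℓ)‖ ^ 2 := rfl
    rw [hadd, hc, Lmap_apply]
    rw [norm_sub_sq_real, norm_sub_sq_real]
    have hvk : v k = p (iS hnℓ k) - p (i0 hnℓ) := rfl
    rw [real_inner_comm y (v k), hvk, inner_sub_right]
    ring
  -- now assemble
  refine ⟨φ, ⟨psiFun hnℓ G, psiInv hnℓ G, psi_left_inv hnℓ G, psi_right_inv hnℓ G⟩,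
    hφCD, hφsymmCD, contDiff_psiFun hnℓ G hG, contDiff_psiInv hnℓ G hG, ?_⟩
  intro x
  ext j
  have hwx : wmap hnℓ (DpGen p (φ.symm x)) = x := by
    rw [hkey]; exact φ.apply_symm_apply x
  have hRHS : ((EuclideanSpace.equiv (Fin ℓ) ℝ).symm
      (fun i : Fin ℓ => if h : (i : ℕ) < n then x ⟨(i : ℕ), h⟩ else 0)) j =
      if h : (j : ℕ) < n then x ⟨(j : ℕ), h⟩ else 0 := rfl
  show psiFun hnℓ G (DpGen p (φ.symm x)) j = _
  rw [psiFun_apply, hRHS, hwx]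
  have hD : ∀ i, DpGen p (φ.symm x) i = ‖(φ.symm x) - p i‖ ^ 2 := fun i => rfl
  by_cases h : (j : ℕ) < n
  · rw [dif_pos h, dif_pos h, hD, hD]
    have h1 : wmap hnℓ (DpGen p (φ.symm x)) ⟨(j : ℕ), h⟩ = x ⟨(j : ℕ), h⟩ := by rw [hwx]
    rw [wmap_apply, hD, hD] at h1
    exact h1
  · rw [dif_neg h, dif_neg h]
    by_cases h2 : (j : ℕ) = n
    · rw [if_pos h2, hD]
      have : G (i0 hnℓ) x = ‖(φ.symm x) - p (i0 hnℓ)‖ ^ 2 := rfl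
      rw [this]
      ring
    · rw [if_neg h2, hD]
      have : G j x = ‖(φ.symm x) - p j‖ ^ 2 := rfl
      rw [this]
      ring
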